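/- Let r ∈ ℕ and let G be a connected graph whose binary cycle space is generated by cycles of length ≤ r. Let {A₁,A₂} and {C₁,C₂} be separations of G with r-tomic separators X and Y, respectively, such that X and Y are r-coupled, and let {E₁,X,E₂} and {F₁,Y,F₂} be the r-local separations induced by {A₁,A₂} and {C₁,C₂}. Then: (i) the X-link for C_i equals the X-link for F_i, for both i = 1,2; (ii) the Y-link for A_i equals the Y-link for E_i, for both i = 1,2; (iii) E_G(X∩Y, (A_i∖A_{3−i})∩(C_j∖C_{3−j})) = E_i∩F_j∩∂(X∩Y) for all i,j ∈ {1,2}. -/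

import Mathlib

namespace LS

open SimpleGraph

variable {V : Type*}

/-- `(A, B)` is an (oriented) separation of `G`: the two sides cover `V`
and there is no edge between `A ∖ B` and `B ∖ A`. -/
def IsSep (G : SimpleGraph V) (A B : Set V) : Prop :=
  A ∪ B = Set.univ ∧ ∀ a ∈ A \ B, ∀ b ∈ B \ A, ¬G.Adj a b

/-- `(A,B) ≥ (C,D)` for oriented separations, i.e. `A ⊆ C` and `B ⊇ D`. -/
def SepGE (s t : Set V × Set V) : Prop := s.1 ⊆ t.1 ∧ t.2 ⊆ s.2

/-- Two (unoriented) separations are nested if they have `≥`-comparable orientations. -/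
def Nested (s t : Set V × Set V) : Prop :=
  SepGE s t ∨ SepGE s (t.2, t.1) ∨ SepGE (s.2, s.1) t ∨ SepGE (s.2, s.1) (t.2, t.1)

/-- Two separations cross if they are not nested. -/
def Crosses (s t : Set V × Set V) : Prop := ¬Nested s t

/-- The neighbourhood `N_G(K)` of a vertex set `K`. -/
def nbhdSet (G : SimpleGraph V) (K : Set V) : Set V :=
  {v | v ∉ K ∧ ∃ u ∈ K, G.Adj u v}

/-- `K` is (the vertex set of) a connected component of the subgraph of `G` induced on `S`. -/
def IsCompOf (G : SimpleGraph V) (K S : Set V) : Prop :=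
  K.Nonempty ∧ K ⊆ S ∧ (G.induce K).Connected ∧ ∀ a ∈ K, ∀ b ∈ S, G.Adj a b → b ∈ K

/-- `K` is a component of `G − X` that is tight at `X`, i.e. `N_G(K) = X`. -/
def TightCompAt (G : SimpleGraph V) (K X : Set V) : Prop :=
  IsCompOf G K Xᶜ ∧ nbhdSet G K = X

/-- A separation `{A,B}` is tight if `G − (A ∩ B)` has tight components
contained in `A` and in `B`, respectively. -/
def TightSep (G : SimpleGraph V) (A B : Set V) : Prop :=
  (∃ K, TightCompAt G K (A ∩ B) ∧ K ⊆ A) ∧ ∃ K, TightCompAt G K (A ∩ B) ∧ K ⊆ B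

/-- `X` is a tight separator: `G − X` has at least two components tight at `X`. -/
def TightSeparator (G : SimpleGraph V) (X : Set V) : Prop :=
  ∃ K₁ K₂, K₁ ≠ K₂ ∧ TightCompAt G K₁ X ∧ TightCompAt G K₂ X

/-- The set `E_G(S,T)` of edges of `G` with one end in `S` and the other in `T`. -/
def edgesBetween (G : SimpleGraph V) (S T : Set V) : Set (Sym2 V) :=
  {e | ∃ u v, G.Adj u v ∧ e = s(u, v) ∧ u ∈ S ∧ v ∈ T}

/-- `∂X`: the set of edges of `G` with exactly one end in `X`. -/
def edgeBdry (G : SimpleGraph V) (X : Set V) : Set (Sym2 V) :=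
  {e | ∃ u v, G.Adj u v ∧ e = s(u, v) ∧ u ∈ X ∧ v ∉ X}

/-- The separator of an oriented separation. -/
def tsSep (s : Set V × Set V) : Set V := s.1 ∩ s.2

/-- `p` lists the three distinct oriented separations of a ⊤-star. -/
def IsTStar (G : SimpleGraph V) (p : Fin 3 → Set V × Set V) : Prop :=
  Function.Injective p ∧ (∀ i, IsSep G (p i).1 (p i).2) ∧
  (∀ i j, i ≠ j → Disjoint ((p i).1 \ (p i).2) ((p j).1 \ (p j).2)) ∧
  (⋃ i, ((p i).1 \ (p i).2)) = (⋃ i, tsSep (p i))ᶜ ∧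
  ∀ i, ∀ v ∈ tsSep (p i), ∃ j, j ≠ i ∧ v ∈ tsSep (p j)

/-- The centre `Z` of a ⊤-star. -/
def tsCentre (p : Fin 3 → Set V × Set V) : Set V := ⋂ i, tsSep (p i)

/-- The `ij`-link `X_{ij}` of a ⊤-star. -/
def tsLink (p : Fin 3 → Set V × Set V) (i j : Fin 3) : Set V :=
  (tsSep (p i) ∩ tsSep (p j)) \ tsCentre p

/-- The ⊤-star `p` is relevant with base `p 0`. -/
def RelevantTStar (G : SimpleGraph V) (p : Fin 3 → Set V × Set V) : Prop :=
  IsTStar G p ∧ TightSep G (p 0).1 (p 0).2 ∧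
  ∀ x ∈ tsLink p 1 2, ∀ i : Fin 3, i ≠ 0 →
    (∃ y ∈ tsLink p 0 i, G.Adj x y) ∨
    ∃ y ∈ tsLink p 0 i ∪ tsCentre p, ∃ K, IsCompOf G K ((p i).1 \ (p i).2) ∧
      x ∈ nbhdSet G K ∧ y ∈ nbhdSet G K

/-- A bottleneck of order `k` in `G`, encoded as a set of oriented separations
closed under reversal (representing a set of unoriented separations). -/
def IsBottleneck (G : SimpleGraph V) (k : ℕ) (β : Set (Set V × Set V)) : Prop :=
  β.Nonempty ∧ (∀ s ∈ β, (s.2, s.1) ∈ β) ∧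
  (∀ s ∈ β, IsSep G s.1 s.2 ∧ TightSep G s.1 s.2 ∧ (s.1 ∩ s.2).encard = k) ∧
  ∀ p : Fin 3 → Set V × Set V, RelevantTStar G p →
    (∀ i, (tsSep (p i)).encard ≤ (k : ℕ∞)) → p 0 ∈ β → p 1 ∈ β ∨ p 2 ∈ β

/-! ### Tangles -/

/-- A tangle of order `ℓ` in `G`. -/
def IsTangle (G : SimpleGraph V) (ℓ : ℕ) (τ : Set (Set V × Set V)) : Prop :=
  (∀ s ∈ τ, IsSep G s.1 s.2 ∧ (s.1 ∩ s.2).encard < (ℓ : ℕ∞)) ∧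
  (∀ A B : Set V, IsSep G A B → (A ∩ B).encard < (ℓ : ℕ∞) → ((A, B) ∈ τ ∨ (B, A) ∈ τ)) ∧
  (∀ A B : Set V, (A, B) ∈ τ → (B, A) ∈ τ → A = B) ∧
  ∀ s₁ ∈ τ, ∀ s₂ ∈ τ, ∀ s₃ ∈ τ,
    ¬(s₁.1 ∪ s₂.1 ∪ s₃.1 = Set.univ ∧
      ∀ u v : V, G.Adj u v →
        (u ∈ s₁.1 ∧ v ∈ s₁.1) ∨ (u ∈ s₂.1 ∧ v ∈ s₂.1) ∨ (u ∈ s₃.1 ∧ v ∈ s₃.1))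

/-- The separation `{A,B}` distinguishes the tangles `τ` and `τ'`. -/
def DistinguishesT (τ τ' : Set (Set V × Set V)) (A B : Set V) : Prop :=
  ((A, B) ∈ τ ∧ (B, A) ∈ τ') ∨ ((B, A) ∈ τ ∧ (A, B) ∈ τ')

/-- The separation `{A,B}` distinguishes the vertex sets `Y` and `Z`. -/
def DistSets (Y Z A B : Set V) : Prop :=
  (Y ⊆ A ∧ (Y ∩ (A \ B)).Nonempty ∧ Z ⊆ B ∧ (Z ∩ (B \ A)).Nonempty) ∨
  (Y ⊆ B ∧ (Y ∩ (B \ A)).Nonempty ∧ Z ⊆ A ∧ (Z ∩ (A \ B)).Nonempty)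

/-! ### The construction of the nested sets `N^k(G)` -/

/-- `X^k`: the union of all `k`-bottlenecks in `G`. -/
def Xk (G : SimpleGraph V) (k : ℕ) : Set (Set V × Set V) :=
  {s | ∃ β, IsBottleneck G k β ∧ s ∈ β}

/-- `x^k(s)`: the number of separations in `X^k` that `s` crosses. -/
noncomputable def xk (G : SimpleGraph V) (k : ℕ) (s : Set V × Set V) : ℕ :=
  {t ∈ Xk G k | Crosses s t}.ncard

/-- `N^k(G,β)` relative to a previously constructed set `M` of separations:
the elements of `β` nested with `M` that minimise `x^k` among those. -/
def NkOfBeta (G : SimpleGraph V) (M : Set (Set V × Set V)) (k : ℕ)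
    (β : Set (Set V × Set V)) : Set (Set V × Set V) :=
  {s ∈ β | (∀ t ∈ M, Nested s t) ∧
    ∀ s' ∈ β, (∀ t ∈ M, Nested s' t) → xk G k s ≤ xk G k s'}

/-- `N^k(G)` relative to a previously constructed set `M`. -/
def NkStep (G : SimpleGraph V) (M : Set (Set V × Set V)) (k : ℕ) :
    Set (Set V × Set V) :=
  {s | ∃ β, IsBottleneck G k β ∧ s ∈ NkOfBeta G M k β}

/-- `N^{<k}(G) = ⋃_{j<k} N^j(G)`. -/
noncomputable def Nlt (G : SimpleGraph V) : ℕ → Set (Set V × Set V)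
  | 0 => ∅
  | k + 1 => Nlt G k ∪ NkStep G (Nlt G k) k

/-- `N^k(G)`. -/
noncomputable def Nk (G : SimpleGraph V) (k : ℕ) : Set (Set V × Set V) :=
  NkStep G (Nlt G k) k

/-- `N(G) = ⋃_k N^k(G)`. -/
noncomputable def NSet (G : SimpleGraph V) : Set (Set V × Set V) :=
  ⋃ k, Nk G k

/-! ### Walks, local components and local separations -/

/-- An `X`-walk: a walk having precisely its first and last vertex in `X`. -/
def IsXWalk (G : SimpleGraph V) (X : Set V) {u v : V} (W : G.Walk u v) : Prop :=
  u ∈ X ∧ v ∈ X ∧ ∀ w ∈ W.support, w ∈ X → w = u ∨ w = v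

/-- An `r`-local `X`-walk: an `X`-walk contained in a cycle of length `≤ r`,
or an `X`-walk consisting of a single `X`-edge. -/
def IsLocalXWalk (G : SimpleGraph V) (r : ℕ) (X : Set V) {u v : V} (W : G.Walk u v) :
    Prop :=
  IsXWalk G X W ∧
  ((∃ (a : V) (C : G.Walk a a), C.IsCycle ∧ C.length ≤ r ∧ ∀ e ∈ W.edges, e ∈ C.edges) ∨
    W.length = 1)

/-- An `r`-local `X`-path. -/
def IsLocalXPath (G : SimpleGraph V) (r : ℕ) (X : Set V) {u v : V} (W : G.Walk u v) :
    Prop :=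
  IsLocalXWalk G r X W ∧ W.IsPath

/-- Walks that are concatenations of `r`-local `X`-paths. -/
inductive ConcatLocalPaths (G : SimpleGraph V) (r : ℕ) (X : Set V) :
    ∀ {u v : V}, G.Walk u v → Prop
  | single {u v : V} (W : G.Walk u v) (h : IsLocalXPath G r X W) :
      ConcatLocalPaths G r X W
  | comp {u v w : V} (W₁ : G.Walk u v) (W₂ : G.Walk v w)
      (h₁ : IsLocalXPath G r X W₁) (h₂ : ConcatLocalPaths G r X W₂) :
      ConcatLocalPaths G r X (W₁.append W₂)

/-- `W ∈ W_r(X)`: `W` is a concatenation of `r`-local `X`-paths repeating no vertex of `X`. -/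
def MemWr (G : SimpleGraph V) (r : ℕ) (X : Set V) {u v : V} (W : G.Walk u v) : Prop :=
  ConcatLocalPaths G r X W ∧ ∀ x ∈ X, ¬W.support.Duplicate x

/-- `X` is `r`-tomic: any two of its vertices are joined by a walk in `W_r(X)`. -/
def Rtomic (G : SimpleGraph V) (r : ℕ) (X : Set V) : Prop :=
  ∀ x ∈ X, ∀ y ∈ X, x ≠ y → ∃ W : G.Walk x y, MemWr G r X W

/-- One step of the relation generating the `r`-local components at `X`:
`e = f`, or `e` and `f` are the first and last edges of an `r`-local `X`-walk
(both required to lie in `∂X`). -/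
def LocalEdgeStep (G : SimpleGraph V) (r : ℕ) (X : Set V) (e f : Sym2 V) : Prop :=
  e ∈ edgeBdry G X ∧ f ∈ edgeBdry G X ∧
  (e = f ∨ ∃ (u v : V) (W : G.Walk u v), IsLocalXWalk G r X W ∧
      W.edges.head? = some e ∧ W.edges.getLast? = some f)

/-- `F` is an `r`-local component at `X`: an equivalence class of the transitive
closure of `LocalEdgeStep` on `∂X`. -/
def LocalCompAt (G : SimpleGraph V) (r : ℕ) (X : Set V) (F : Set (Sym2 V)) : Prop :=
  ∃ e ∈ edgeBdry G X, F = {f | Relation.ReflTransGen (LocalEdgeStep G r X) e f}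

/-- An edge set `F` is tight with respect to `X` if every vertex of `X`
is incident with an edge of `F`. -/
def TightLocalComp (X : Set V) (F : Set (Sym2 V)) : Prop :=
  ∀ x ∈ X, ∃ e ∈ F, x ∈ e

/-- `X` is a tight `r`-local separator: at least two tight `r`-local components at `X`. -/
def TightLocalSeparator (G : SimpleGraph V) (r : ℕ) (X : Set V) : Prop :=
  ∃ F₁ F₂, F₁ ≠ F₂ ∧ LocalCompAt G r X F₁ ∧ LocalCompAt G r X F₂ ∧
    TightLocalComp X F₁ ∧ TightLocalComp X F₂

/-- `(E₁, X, E₂)` is an (oriented) `r`-local separation of `G`. -/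
def IsLocalSep (G : SimpleGraph V) (r : ℕ) (E₁ : Set (Sym2 V)) (X : Set V)
    (E₂ : Set (Sym2 V)) : Prop :=
  Disjoint E₁ E₂ ∧ E₁ ∪ E₂ = edgeBdry G X ∧
    ∀ F, LocalCompAt G r X F → F ⊆ E₁ ∨ F ⊆ E₂

/-- A tight `r`-local separation: each side includes a tight `r`-local component at `X`. -/
def TightLocalSep (G : SimpleGraph V) (r : ℕ) (E₁ : Set (Sym2 V)) (X : Set V)
    (E₂ : Set (Sym2 V)) : Prop :=
  IsLocalSep G r E₁ X E₂ ∧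
  (∃ F, LocalCompAt G r X F ∧ TightLocalComp X F ∧ F ⊆ E₁) ∧
  ∃ F, LocalCompAt G r X F ∧ TightLocalComp X F ∧ F ⊆ E₂

/-- The oriented `r`-local separation `s_r` induced by the oriented separation
`s = (A₁, A₂)`: its separator is `X = A₁ ∩ A₂`, and its sides are
`E_i = E_G(A_i ∖ X, X)`. -/
def inducedLocal (G : SimpleGraph V) (s : Set V × Set V) :
    Set (Sym2 V) × Set V × Set (Sym2 V) :=
  (edgesBetween G (s.1 \ (s.1 ∩ s.2)) (s.1 ∩ s.2), s.1 ∩ s.2,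
    edgesBetween G (s.2 \ (s.1 ∩ s.2)) (s.1 ∩ s.2))

/-- Some cycle of `G` of length `≤ r` alternates between the disjoint sets `X` and `Y`:
it visits four distinct vertices `x, y, x', y'` in this cyclic order with
`x, x' ∈ X` and `y, y' ∈ Y`. -/
def Alternates (G : SimpleGraph V) (r : ℕ) (X Y : Set V) : Prop :=
  ∃ (a : V) (C : G.Walk a a), C.IsCycle ∧ C.length ≤ r ∧
    ∃ (x y x' y' : V) (l₁ l₂ l₃ l₄ l₅ : List V),
      x ∈ X ∧ x' ∈ X ∧ y ∈ Y ∧ y' ∈ Y ∧ x ≠ x' ∧ y ≠ y' ∧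
      C.support = l₁ ++ x :: l₂ ++ y :: l₃ ++ x' :: l₄ ++ y' :: l₅

/-- `X` and `Y` are `r`-coupled. -/
def RCoupled (G : SimpleGraph V) (r : ℕ) (X Y : Set V) : Prop :=
  (X ∩ Y).Nonempty ∨ (Disjoint X Y ∧ Alternates G r X Y)

/-- The `X`-link for the side `Fi` of an `r`-local separation with separator `Y`:
vertices `x ∈ X ∖ Y` from which some walk in `W_r(X)` visits `Y` with its first
edge in `∂Y` lying in `Fi`. -/
def LocalLink (G : SimpleGraph V) (r : ℕ) (X Y : Set V) (Fi : Set (Sym2 V)) : Set V :=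
  {x | x ∈ X \ Y ∧ ∃ (z : V) (W : G.Walk x z), MemWr G r X W ∧
      (∃ y ∈ Y, y ∈ W.support) ∧
      ∃ (e : Sym2 V) (l₁ l₂ : List (Sym2 V)), W.edges = l₁ ++ e :: l₂ ∧
        e ∈ edgeBdry G Y ∧ e ∈ Fi ∧ ∀ e' ∈ l₁, e' ∉ edgeBdry G Y}

/-- The `r`-local separations `{E₁,X,E₂}` and `{F₁,Y,F₂}` cross. -/
def LocalCrosses (G : SimpleGraph V) (r : ℕ) (E₁ : Set (Sym2 V)) (X : Set V)
    (E₂ : Set (Sym2 V)) (F₁ : Set (Sym2 V)) (Y : Set V) (F₂ : Set (Sym2 V)) : Prop :=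
  RCoupled G r X Y ∧ ∀ i j : Bool,
    (LocalLink G r X Y (cond j F₁ F₂)).Nonempty ∨
    (LocalLink G r Y X (cond i E₁ E₂)).Nonempty ∨
    ((cond i E₁ E₂) ∩ (cond j F₁ F₂) ∩ edgeBdry G (X ∩ Y)).Nonempty

/-- The edge set of a walk, as a set. -/
def walkEdgeSet {G : SimpleGraph V} {a b : V} (W : G.Walk a b) : Set (Sym2 V) :=
  {e | e ∈ W.edges}

/-- The binary cycle space of `G` is generated by the cycles of length `≤ r`:
the edge set of every cycle is a symmetric difference of edge sets of cycles
of length `≤ r`. -/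
def CycleSpaceGenShort (G : SimpleGraph V) (r : ℕ) : Prop :=
  ∀ ⦃a : V⦄ (C : G.Walk a a), C.IsCycle →
    ∃ L : List ((b : V) × G.Walk b b),
      (∀ p ∈ L, p.2.IsCycle ∧ p.2.length ≤ r) ∧
      walkEdgeSet C = L.foldr (fun p E => symmDiff (walkEdgeSet p.2) E) ∅

/-! ### Local ⊤-stars and local bottlenecks -/

/-- `q` lists the three oriented `r`-local separations of an `r`-local ⊤-star. -/
def IsLocalTStar (G : SimpleGraph V) (r : ℕ)
    (q : Fin 3 → Set (Sym2 V) × Set V × Set (Sym2 V)) : Prop :=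
  Function.Injective q ∧
  (∀ i, IsLocalSep G r (q i).1 (q i).2.1 (q i).2.2) ∧
  (∀ i j, i ≠ j → Disjoint (q i).1 (q j).1) ∧
  (⋃ i, (q i).1) = edgeBdry G (⋃ i, (q i).2.1) ∧
  (∀ i, ∀ v ∈ (q i).2.1, ∃ j, j ≠ i ∧ v ∈ (q j).2.1) ∧
  ∀ F, LocalCompAt G r (⋃ i, (q i).2.1) F → ∃ i, F ⊆ (q i).1

/-- The `r`-local ⊤-star `q` is relevant with base `q 0`. -/
def RelevantLocalTStar (G : SimpleGraph V) (r : ℕ)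
    (q : Fin 3 → Set (Sym2 V) × Set V × Set (Sym2 V)) : Prop :=
  IsLocalTStar G r q ∧ TightLocalSep G r (q 0).1 (q 0).2.1 (q 0).2.2 ∧
  ∀ x ∈ ((q 1).2.1 ∩ (q 2).2.1) \ ⋂ j, (q j).2.1, ∀ i : Fin 3, i ≠ 0 →
    (∃ y ∈ ((q 0).2.1 ∩ (q i).2.1) \ ⋂ j, (q j).2.1, G.Adj x y) ∨
    ∃ F, LocalCompAt G r (⋃ j, (q j).2.1) F ∧ F ⊆ (q i).1 ∧
      (∃ e ∈ F, x ∈ e) ∧ ∃ e ∈ F, ∃ y ∈ (q 0).2.1 ∩ (q i).2.1, y ∈ e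

/-- An `r`-local bottleneck of order `k` in `G`, encoded as a set of oriented
`r`-local separations closed under reversal. -/
def IsLocalBottleneck (G : SimpleGraph V) (r k : ℕ)
    (β : Set (Set (Sym2 V) × Set V × Set (Sym2 V))) : Prop :=
  β.Nonempty ∧ (∀ q ∈ β, (q.2.2, q.2.1, q.1) ∈ β) ∧
  (∀ q ∈ β, TightLocalSep G r q.1 q.2.1 q.2.2 ∧ q.2.1.encard = (k : ℕ∞)) ∧
  ∀ p : Fin 3 → Set (Sym2 V) × Set V × Set (Sym2 V), RelevantLocalTStar G r p →
    (∀ i, ((p i).2.1).encard ≤ (k : ℕ∞)) → p 0 ∈ β → p 1 ∈ β ∨ p 2 ∈ β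

end LS

/-!
The side of a separation `(C, D)` on which a vertex `x ∉ C ∩ D` lies can be read off from the
first edge of `∂(C ∩ D)` on any walk starting at `x`: before that edge the walk never meets the
separator, so it cannot cross from `C ∖ D` to `D ∖ C`. Hence the `X`-link for `F_i` lies in the
`X`-link for `C_i`, and for the converse it suffices to reach `Y` from every `x ∈ X ∖ Y` by a walk
in `W_r(X)`. If `X` meets `Y`, `r`-tomicity gives such a walk directly. Otherwise a short cycle
alternating between `X` and `Y` contains an `r`-local `X`-path through a vertex of `Y`; an
`r`-tomic walk from `x` to one end of that path, cut at the first end it meets, extends by the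
path to a walk in `W_r(X)`. Part (iii) is set algebra.
-/

theorem List.duplicate_append_iff {α : Type*} {l₁ l₂ : List α} {a : α} :
    (l₁ ++ l₂).Duplicate a ↔ l₁.Duplicate a ∨ l₂.Duplicate a ∨ (a ∈ l₁ ∧ a ∈ l₂) := by
  classical
  simp only [List.duplicate_iff_two_le_count, List.count_append, ← List.count_pos_iff]
  omega

theorem List.exists_eq_append_cons_of_exists_mem {α : Type*} {p : α → Prop} {l : List α}
    (h : ∃ a ∈ l, p a) : ∃ l₁ a l₂, l = l₁ ++ a :: l₂ ∧ p a ∧ ∀ b ∈ l₁, ¬p b := by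
  classical
  obtain ⟨a, ha⟩ := Option.isSome_iff_exists.mp
    (List.find?_isSome.mpr (by simpa using h) : (l.find? (p ·)).isSome)
  obtain ⟨hpa, l₁, l₂, rfl, hl₁⟩ := List.find?_eq_some_iff_append.mp ha
  exact ⟨l₁, a, l₂, rfl, by simpa using hpa, fun b hb => by simpa using hl₁ b hb⟩

namespace SimpleGraph.Walk

variable {V : Type*} {G : SimpleGraph V}

theorem exists_append_of_support_eq {u v y : V} (W : G.Walk u v) (m m₂ : List V)
    (h : W.support = m ++ y :: m₂) :
    ∃ (W₁ : G.Walk u y) (W₂ : G.Walk y v),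
      W = W₁.append W₂ ∧ W₁.support = m ++ [y] ∧ W₂.support = y :: m₂ := by
  induction W generalizing m with
  | nil =>
    rcases m with _ | ⟨_, _ | _⟩
    · obtain ⟨rfl, rfl⟩ : _ = y ∧ [] = m₂ := by simpa using h
      exact ⟨.nil, .nil, rfl, rfl, rfl⟩
    all_goals simp at h
  | @cons u w v hadj W ih =>
    rcases m with _ | ⟨c, m⟩
    · obtain ⟨rfl, -⟩ := List.cons_eq_cons.mp h
      exact ⟨.nil, .cons hadj W, rfl, rfl, h⟩
    · obtain ⟨rfl, hW⟩ := List.cons_eq_cons.mp h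
      obtain ⟨W₁, W₂, rfl, h₁, h₂⟩ := ih m hW
      exact ⟨.cons hadj W₁, W₂, rfl, by rw [support_cons, h₁]; rfl, h₂⟩

theorem exists_append_first_mem {u v : V} (W : G.Walk u v) (X : Set V)
    (h : ∃ w ∈ W.support, w ∈ X) :
    ∃ q ∈ X, ∃ (P : G.Walk u q) (R : G.Walk q v),
      W = P.append R ∧ ∀ w ∈ P.support, w ∈ X → w = q := by
  induction W with
  | nil =>
    obtain ⟨w, hw, hwX⟩ := h
    rw [support_nil, List.mem_singleton] at hw
    subst hw
    exact ⟨w, hwX, .nil, .nil, rfl, by simp⟩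
  | @cons u w v hadj W ih =>
    by_cases huX : u ∈ X
    · exact ⟨u, huX, .nil, .cons hadj W, rfl, by simp⟩
    obtain ⟨w', hw', hw'X⟩ := h
    rcases List.mem_cons.mp (support_cons hadj W ▸ hw') with rfl | hw'
    · exact absurd hw'X huX
    obtain ⟨q, hqX, P, R, rfl, hP⟩ := ih ⟨w', hw', hw'X⟩
    refine ⟨q, hqX, .cons hadj P, R, rfl, fun w' hw' hw'X => ?_⟩
    rcases List.mem_cons.mp (support_cons hadj P ▸ hw') with rfl | hw'
    · exact absurd hw'X huX
    · exact hP w' hw' hw'X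

end SimpleGraph.Walk

namespace LS

variable {V : Type*}

open SimpleGraph SimpleGraph.Walk

section LocalWalks

variable {G : SimpleGraph V} {r : ℕ} {X : Set V}

theorem IsLocalXPath.reverse {p q : V} {S : G.Walk p q} (h : IsLocalXPath G r X S) :
    IsLocalXPath G r X S.reverse := by
  obtain ⟨⟨⟨hp, hq, hX⟩, hloc⟩, hpath⟩ := h
  refine ⟨⟨⟨hq, hp, fun w hw hwX => ?_⟩, ?_⟩, hpath.reverse⟩
  · rw [support_reverse, List.mem_reverse] at hw
    exact (hX w hw hwX).symm
  · rcases hloc with ⟨a, C, hC, hlen, hsub⟩ | hlen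
    · exact Or.inl ⟨a, C, hC, hlen, fun e he => hsub e (by simpa using he)⟩
    · exact Or.inr (by rwa [length_reverse])

theorem IsLocalXPath.memWr {p q : V} {S : G.Walk p q} (h : IsLocalXPath G r X S) :
    MemWr G r X S :=
  ⟨.single S h, fun x _ => List.nodup_iff_forall_not_duplicate.mp h.2.support_nodup x⟩

theorem IsLocalXPath.mem_tail_support {p q : V} {S : G.Walk p q} (h : IsLocalXPath G r X S)
    {w : V} (hw : w ∈ S.support.tail) (hwX : w ∈ X) : w = q := by
  have hnd := h.2.support_nodup
  rw [← cons_tail_support] at hnd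
  refine (h.1.1.2.2 w (List.mem_of_mem_tail hw) hwX).resolve_left ?_
  rintro rfl
  exact (List.nodup_cons.mp hnd).1 hw

theorem ConcatLocalPaths.append_localXPath {u v w : V} {W : G.Walk u v}
    (hW : ConcatLocalPaths G r X W) {P : G.Walk v w} (hP : IsLocalXPath G r X P) :
    ConcatLocalPaths G r X (W.append P) := by
  induction hW with
  | single W h => exact .comp W P h (.single P hP)
  | comp W₁ W₂ h₁ _ ih =>
    rw [← append_assoc]
    exact .comp W₁ _ h₁ (ih hP)

theorem ConcatLocalPaths.exists_append_eq {u v : V} {W : G.Walk u v}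
    (hW : ConcatLocalPaths G r X W) {q : V} (hqX : q ∈ X) (hq : q ∈ W.support)
    (hqu : q ≠ u) :
    ∃ (P : G.Walk u q) (R : G.Walk q v), W = P.append R ∧ ConcatLocalPaths G r X P := by
  induction hW with
  | single W h =>
    obtain rfl := (h.1.1.2.2 q hq hqX).resolve_left hqu
    exact ⟨W, .nil, (append_nil W).symm, .single W h⟩
  | @comp u v w W₁ W₂ h₁ _ ih =>
    by_cases hqv : q = v
    · subst hqv
      exact ⟨W₁, W₂, rfl, .single W₁ h₁⟩
    rcases (mem_support_append_iff W₁ W₂).mp hq with hq₁ | hq₂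
    · exact absurd ((h₁.1.1.2.2 q hq₁ hqX).resolve_left hqu) hqv
    · obtain ⟨P, R, rfl, hP⟩ := ih hq₂ hqv
      exact ⟨W₁.append P, R, append_assoc _ _ _, .comp W₁ P h₁ hP⟩

theorem MemWr.append_localXPath {u a b : V} {W : G.Walk u a} (hW : MemWr G r X W)
    {S : G.Walk a b} (hS : IsLocalXPath G r X S) (hb : b ∉ W.support) :
    MemWr G r X (W.append S) := by
  refine ⟨hW.1.append_localXPath hS, fun x hx hdup => ?_⟩
  have hnd := hS.2.support_nodup
  rw [← cons_tail_support] at hnd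
  rw [support_append, List.duplicate_append_iff] at hdup
  rcases hdup with h | h | ⟨h₁, h₂⟩
  · exact hW.2 x hx h
  · exact h.not_nodup (List.nodup_cons.mp hnd).2
  · exact hb (hS.mem_tail_support h₂ hx ▸ h₁)

theorem MemWr.exists_prefix {u v : V} {W : G.Walk u v} (hW : MemWr G r X W) (hvX : v ∈ X)
    {q : V} (hqX : q ∈ X) (hq : q ∈ W.support) (hqu : q ≠ u) (hqv : q ≠ v) :
    ∃ P : G.Walk u q, MemWr G r X P ∧ v ∉ P.support := by
  obtain ⟨P, R, rfl, hP⟩ := hW.1.exists_append_eq hqX hq hqu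
  refine ⟨P, ⟨hP, fun x hx hdup => hW.2 x hx ?_⟩, fun hvP => hW.2 v hvX ?_⟩
  · rw [support_append, List.duplicate_append_iff]
    exact Or.inl hdup
  · rw [support_append, List.duplicate_append_iff]
    exact Or.inr (Or.inr ⟨hvP, end_mem_tail_support_of_ne hqv R⟩)

theorem Rtomic.exists_memWr_support_subset (htom : Rtomic G r X) {x p q : V} (hx : x ∈ X)
    {S : G.Walk p q} (hS : IsLocalXPath G r X S) (hpq : p ≠ q) :
    ∃ (z : V) (W : G.Walk x z), MemWr G r X W ∧ S.support ⊆ W.support := by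
  obtain ⟨hpX, hqX, -⟩ := hS.1.1
  by_cases hxp : x = p
  · subst hxp
    exact ⟨q, S, hS.memWr, fun _ hw => hw⟩
  by_cases hxq : x = q
  · subst hxq
    exact ⟨p, S.reverse, hS.reverse.memWr, fun w hw => by simpa using hw⟩
  obtain ⟨W, hW⟩ := htom x hx p hpX hxp
  by_cases hqW : q ∈ W.support
  · obtain ⟨P, hP, hpP⟩ := hW.exists_prefix hpX hqX hqW (Ne.symm hxq) (Ne.symm hpq)
    exact ⟨p, P.append S.reverse, hP.append_localXPath hS.reverse hpP,
      fun w hw => by simp [mem_support_append_iff, hw]⟩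
  · exact ⟨q, W.append S, hW.append_localXPath hS hqW,
      fun w hw => (mem_support_append_iff W S).mpr (Or.inr hw)⟩

end LocalWalks

section Coupling

variable {G : SimpleGraph V} {r : ℕ} {X : Set V}

theorem exists_localXPath_of_isCycle {a y : V} {C : G.Walk a a} (hC : C.IsCycle)
    (hlen : C.length ≤ r) {m m₂ : List V} (hsupp : C.support.tail = m ++ y :: m₂)
    (hm : ∃ w ∈ m, w ∈ X) (hm₂ : ∃ w ∈ m₂, w ∈ X) :
    ∃ (p q : V) (S : G.Walk p q), IsLocalXPath G r X S ∧ y ∈ S.support := by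
  cases C with
  | nil => exact absurd hC not_isCycle_nil
  | cons hadj D =>
    have hD : D.IsPath := ((cons_isCycle_iff D hadj).mp hC).1
    rw [support_cons, List.tail_cons] at hsupp
    obtain ⟨D₁, D₂, rfl, h₁, h₂⟩ := D.exists_append_of_support_eq m m₂ hsupp
    obtain ⟨q, hqX, Q₁, Q₂, rfl, hQ₁⟩ := D₂.exists_append_first_mem X (by
      obtain ⟨w, hw, hwX⟩ := hm₂
      exact ⟨w, by simp [h₂, hw], hwX⟩)
    obtain ⟨p, hpX, P₁, P₂, hP, hP₁⟩ := D₁.reverse.exists_append_first_mem X (by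
      obtain ⟨w, hw, hwX⟩ := hm
      exact ⟨w, by simp [h₁, hw], hwX⟩)
    obtain rfl : D₁ = P₂.reverse.append P₁.reverse := by
      rw [← reverse_append, ← hP, reverse_reverse]
    refine ⟨p, q, P₁.reverse.append Q₁, ⟨⟨⟨hpX, hqX, fun w hw hwX => ?_⟩,
      Or.inl ⟨_, _, hC, hlen, fun e he => ?_⟩⟩, ?_⟩, by simp⟩
    · rw [mem_support_append_iff, support_reverse, List.mem_reverse] at hw
      exact hw.imp (hP₁ w · hwX) (hQ₁ w · hwX)
    · simp only [edges_append, edges_reverse, List.mem_append, List.mem_reverse] at he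
      rcases he with he | he <;> simp [edges_append, he]
    · rw [append_assoc, ← append_assoc P₂.reverse] at hD
      exact hD.of_append_left.of_append_right

theorem exists_localXPath_of_alternates {Y : Set V} (hXY : Disjoint X Y)
    (halt : Alternates G r X Y ∨ Alternates G r Y X) :
    ∃ (p q : V) (S : G.Walk p q), IsLocalXPath G r X S ∧ ∃ y ∈ Y, y ∈ S.support := by
  suffices ∃ (a : V) (C : G.Walk a a), C.IsCycle ∧ C.length ≤ r ∧ ∃ (y : V) (m m₂ : List V),
      C.support.tail = m ++ y :: m₂ ∧ y ∈ Y ∧ (∃ w ∈ m, w ∈ X) ∧ ∃ w ∈ m₂, w ∈ X by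
    obtain ⟨a, C, hC, hlen, y, m, m₂, hsupp, hyY, hm, hm₂⟩ := this
    obtain ⟨p, q, S, hS, hy⟩ := exists_localXPath_of_isCycle hC hlen hsupp hm hm₂
    exact ⟨p, q, S, hS, y, hyY, hy⟩
  rcases halt with
    ⟨a, C, hC, hlen, x, y, x', y', l₁, l₂, l₃, l₄, l₅, hx, hx', hy, hy', -, -, hsupp⟩ |
    ⟨a, C, hC, hlen, y, x, y', x', l₁, l₂, l₃, l₄, l₅, hy, hy', hx, hx', -, -, hsupp⟩
  · rcases l₁ with _ | ⟨c, l₁⟩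
    · -- `x` is the base vertex of `C`, so it also closes the cycle after `y'`
      rw [← cons_tail_support] at hsupp
      simp only [List.nil_append, List.cons_append, List.cons.injEq, List.append_assoc] at hsupp
      obtain ⟨rfl, htail⟩ := hsupp
      refine ⟨a, C, hC, hlen, y', l₂ ++ y :: l₃ ++ x' :: l₄, l₅, by simp [htail], hy',
        ⟨x', by simp, hx'⟩, ?_⟩
      have hlast : C.support.getLast? = some a := by
        rw [List.getLast?_eq_some_getLast (by simp), C.getLast_support]
      rw [← cons_tail_support, htail] at hlast
      rcases l₅.eq_nil_or_concat with rfl | ⟨L, b, rfl⟩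
      · simp [List.getLast?_cons, List.getLast?_append] at hlast
        exact absurd (hlast ▸ hx) (hXY.notMem_of_mem_right hy')
      · simp [List.getLast?_cons, List.getLast?_append] at hlast
        exact ⟨b, by simp, hlast ▸ hx⟩
    · refine ⟨a, C, hC, hlen, y, l₁ ++ x :: l₂, l₃ ++ x' :: l₄ ++ y' :: l₅, ?_, hy,
        ⟨x, by simp, hx⟩, ⟨x', by simp, hx'⟩⟩
      rw [hsupp]
      simp
  · refine ⟨a, C, hC, hlen, y', (l₁ ++ y :: l₂).tail ++ x :: l₃, l₄ ++ x' :: l₅, ?_, hy',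
      ⟨x, by simp, hx⟩, ⟨x', by simp, hx'⟩⟩
    rw [hsupp, List.append_assoc, List.append_assoc, List.cons_append,
      List.tail_append_of_ne_nil (by simp)]
    simp

end Coupling

section Links

variable {G : SimpleGraph V} {r : ℕ}

theorem IsSep.symm {A B : Set V} (h : IsSep G A B) : IsSep G B A :=
  ⟨Set.union_comm A B ▸ h.1, fun a ha b hb hab => h.2 b hb a ha hab.symm⟩

theorem IsSep.mem_left_iff_of_adj {A B : Set V} (h : IsSep G A B) {u v : V}
    (hu : u ∉ A ∩ B) (hv : v ∉ A ∩ B) (huv : G.Adj u v) : u ∈ A ↔ v ∈ A := by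
  have hcover : ∀ w, w ∈ A ∪ B := fun w => h.1 ▸ Set.mem_univ w
  constructor
  · intro huA
    by_contra hvA
    exact h.2 u ⟨huA, fun huB => hu ⟨huA, huB⟩⟩ v ⟨(hcover v).resolve_left hvA, hvA⟩ huv
  · intro hvA
    by_contra huA
    exact h.2 v ⟨hvA, fun hvB => hv ⟨hvA, hvB⟩⟩ u ⟨(hcover u).resolve_left huA, huA⟩ huv.symm

theorem mk_mem_edgeBdry_iff {Y : Set V} {u v : V} (huv : G.Adj u v) (hu : u ∉ Y) :
    s(u, v) ∈ edgeBdry G Y ↔ v ∈ Y := by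
  constructor
  · rintro ⟨a, b, -, he, ha, -⟩
    rcases Sym2.eq_iff.mp he with ⟨rfl, -⟩ | ⟨-, rfl⟩
    · exact absurd ha hu
    · exact ha
  · exact fun hv => ⟨v, u, huv.symm, Sym2.eq_swap, hv, hu⟩

theorem exists_mem_edges_edgeBdry {Y : Set V} {x y z : V} (W : G.Walk x z) (hx : x ∉ Y)
    (hy : y ∈ Y) (hyW : y ∈ W.support) : ∃ e ∈ W.edges, e ∈ edgeBdry G Y := by
  classical
  obtain ⟨d, hd, hd₁, hd₂⟩ := (W.takeUntil y hyW).exists_boundary_dart Yᶜ hx (by simpa using hy)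
  refine ⟨d.edge, W.edges_takeUntil_subset_edges hyW (List.mem_map_of_mem hd), ?_⟩
  exact ⟨d.snd, d.fst, d.adj.symm, Sym2.eq_swap, by simpa using hd₂, hd₁⟩

/-- Up to its first edge in `∂(C ∩ D)`, a walk cannot change sides of the separation `(C, D)`. -/
theorem IsSep.mem_edgesBetween_iff_of_first_edgeBdry {C D : Set V} (h : IsSep G C D)
    {x z : V} (W : G.Walk x z) (hx : x ∉ C ∩ D) {l₁ l₂ : List (Sym2 V)} {e : Sym2 V}
    (hW : W.edges = l₁ ++ e :: l₂) (he : e ∈ edgeBdry G (C ∩ D))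
    (hl₁ : ∀ e' ∈ l₁, e' ∉ edgeBdry G (C ∩ D)) :
    e ∈ edgesBetween G (C \ (C ∩ D)) (C ∩ D) ↔ x ∈ C := by
  induction W generalizing l₁ with
  | nil => simp at hW
  | @cons x b z hxb W ih =>
    rw [edges_cons] at hW
    rcases l₁ with _ | ⟨e₀, l₁⟩
    · obtain ⟨rfl, -⟩ := List.cons_eq_cons.mp hW
      have hb := (mk_mem_edgeBdry_iff hxb hx).mp he
      refine ⟨fun ⟨u, v, _, huv, hu, hv⟩ => ?_, fun hxC => ⟨x, b, hxb, rfl, ⟨hxC, hx⟩, hb⟩⟩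
      rcases Sym2.eq_iff.mp huv with ⟨rfl, -⟩ | ⟨rfl, -⟩
      · exact hu.1
      · exact absurd hv hx
    · obtain ⟨rfl, hW'⟩ := List.cons_eq_cons.mp hW
      have hb : b ∉ C ∩ D := fun hb =>
        hl₁ _ List.mem_cons_self ((mk_mem_edgeBdry_iff hxb hx).mpr hb)
      rw [ih hb hW' fun e' he' => hl₁ e' (List.mem_cons_of_mem _ he')]
      exact (h.mem_left_iff_of_adj hx hb hxb).symm

theorem Rtomic.exists_memWr_visiting {X Y : Set V} (htom : Rtomic G r X)
    (hcoup : RCoupled G r X Y ∨ RCoupled G r Y X) {x : V} (hx : x ∈ X) (hxY : x ∉ Y) :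
    ∃ (z : V) (W : G.Walk x z), MemWr G r X W ∧ ∃ y ∈ Y, y ∈ W.support := by
  have hcoup' : (X ∩ Y).Nonempty ∨ Disjoint X Y ∧ (Alternates G r X Y ∨ Alternates G r Y X) := by
    rcases hcoup with h | h
    · exact h.imp id fun h => ⟨h.1, .inl h.2⟩
    · exact h.imp (Set.inter_comm Y X ▸ ·) fun h => ⟨h.1.symm, .inr h.2⟩
  rcases hcoup' with ⟨v, hvX, hvY⟩ | ⟨hXY, halt⟩
  · obtain ⟨W, hW⟩ := htom x hx v hvX fun hxv => hxY (hxv ▸ hvY)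
    exact ⟨v, W, hW, v, hvY, W.end_mem_support⟩
  · obtain ⟨p, q, S, hS, y, hyY, hyS⟩ := exists_localXPath_of_alternates hXY halt
    have hpq : p ≠ q := by
      rintro rfl
      rw [nil_iff_support_eq.mp (isPath_iff_nil.mp hS.2), List.mem_singleton] at hyS
      exact hXY.notMem_of_mem_right hyY (hyS ▸ hS.1.1.1)
    obtain ⟨z, W, hW, hSW⟩ := htom.exists_memWr_support_subset hx hS hpq
    exact ⟨z, W, hW, y, hyY, hSW hyS⟩

theorem IsSep.sdiff_eq_localLink {C D X Y : Set V} (h : IsSep G C D) (hY : Y = C ∩ D)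
    (htom : Rtomic G r X) (hcoup : RCoupled G r X Y ∨ RCoupled G r Y X) :
    X \ D = LocalLink G r X Y (edgesBetween G (C \ Y) Y) := by
  subst hY
  ext x
  constructor
  · rintro ⟨hxX, hxD⟩
    have hxC : x ∈ C := (h.1 ▸ Set.mem_univ x : x ∈ C ∪ D).resolve_right hxD
    have hxY : x ∉ C ∩ D := fun hx => hxD hx.2
    obtain ⟨z, W, hW, y, hyY, hyW⟩ := htom.exists_memWr_visiting hcoup hxX hxY
    obtain ⟨l₁, e, l₂, hdec, he, hl₁⟩ :=
      List.exists_eq_append_cons_of_exists_mem (exists_mem_edges_edgeBdry W hxY hyY hyW)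
    exact ⟨⟨hxX, hxY⟩, z, W, hW, ⟨y, hyY, hyW⟩, e, l₁, l₂, hdec, he,
      (h.mem_edgesBetween_iff_of_first_edgeBdry W hxY hdec he hl₁).mpr hxC, hl₁⟩
  · rintro ⟨⟨hxX, hxY⟩, z, W, -, -, e, l₁, l₂, hdec, he, heC, hl₁⟩
    exact ⟨hxX, fun hxD =>
      hxY ⟨(h.mem_edgesBetween_iff_of_first_edgeBdry W hxY hdec he hl₁).mp heC, hxD⟩⟩

theorem edgesBetween_inter_eq {A B C D X Y : Set V} (hX : X = A ∩ B) (hY : Y = C ∩ D) :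
    edgesBetween G (X ∩ Y) ((A \ B) ∩ (C \ D)) =
      edgesBetween G (A \ X) X ∩ edgesBetween G (C \ Y) Y ∩ edgeBdry G (X ∩ Y) := by
  subst hX hY
  ext e
  constructor
  · rintro ⟨u, v, huv, rfl, hu, ⟨hvA, hvB⟩, hvC, hvD⟩
    exact ⟨⟨⟨v, u, huv.symm, Sym2.eq_swap, ⟨hvA, fun h => hvB h.2⟩, hu.1⟩,
      ⟨v, u, huv.symm, Sym2.eq_swap, ⟨hvC, fun h => hvD h.2⟩, hu.2⟩⟩,
      ⟨u, v, huv, rfl, hu, fun h => hvB h.1.2⟩⟩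
  · rintro ⟨⟨⟨u₁, v₁, -, he₁, hu₁, -⟩, ⟨u₂, v₂, -, he₂, hu₂, -⟩⟩, ⟨u, v, huv, rfl, hu, -⟩⟩
    refine ⟨u, v, huv, rfl, hu, ?_⟩
    rcases Sym2.eq_iff.mp he₁ with ⟨rfl, -⟩ | ⟨-, rfl⟩
    · exact absurd hu.1 hu₁.2
    rcases Sym2.eq_iff.mp he₂ with ⟨rfl, -⟩ | ⟨-, rfl⟩
    · exact absurd hu.2 hu₂.2
    exact ⟨⟨hu₁.1, fun h => hu₁.2 ⟨hu₁.1, h⟩⟩, ⟨hu₂.1, fun h => hu₂.2 ⟨hu₂.1, h⟩⟩⟩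

end Links

theorem statement15_general {V : Type*} (G : SimpleGraph V) (r : ℕ)
    (A₁ A₂ C₁ C₂ : Set V)
    (h₁ : IsSep G A₁ A₂) (h₂ : IsSep G C₁ C₂)
    (X Y : Set V) (E₁ E₂ F₁ F₂ : Set (Sym2 V))
    (hX : X = A₁ ∩ A₂) (hY : Y = C₁ ∩ C₂)
    (ht₁ : Rtomic G r X) (ht₂ : Rtomic G r Y)
    (hcoup : RCoupled G r X Y)
    (hE₁ : E₁ = edgesBetween G (A₁ \ X) X) (hE₂ : E₂ = edgesBetween G (A₂ \ X) X)
    (hF₁ : F₁ = edgesBetween G (C₁ \ Y) Y) (hF₂ : F₂ = edgesBetween G (C₂ \ Y) Y) :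
    (X \ C₂ = LocalLink G r X Y F₁) ∧ (X \ C₁ = LocalLink G r X Y F₂) ∧
    (Y \ A₂ = LocalLink G r Y X E₁) ∧ (Y \ A₁ = LocalLink G r Y X E₂) ∧
    (edgesBetween G (X ∩ Y) ((A₁ \ A₂) ∩ (C₁ \ C₂)) = E₁ ∩ F₁ ∩ edgeBdry G (X ∩ Y)) ∧
    (edgesBetween G (X ∩ Y) ((A₁ \ A₂) ∩ (C₂ \ C₁)) = E₁ ∩ F₂ ∩ edgeBdry G (X ∩ Y)) ∧
    (edgesBetween G (X ∩ Y) ((A₂ \ A₁) ∩ (C₁ \ C₂)) = E₂ ∩ F₁ ∩ edgeBdry G (X ∩ Y)) ∧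
    (edgesBetween G (X ∩ Y) ((A₂ \ A₁) ∩ (C₂ \ C₁)) = E₂ ∩ F₂ ∩ edgeBdry G (X ∩ Y)) := by
  have hX' : X = A₂ ∩ A₁ := hX.trans (Set.inter_comm A₁ A₂)
  have hY' : Y = C₂ ∩ C₁ := hY.trans (Set.inter_comm C₁ C₂)
  subst hE₁ hE₂ hF₁ hF₂
  exact ⟨h₂.sdiff_eq_localLink hY ht₁ (.inl hcoup), h₂.symm.sdiff_eq_localLink hY' ht₁ (.inl hcoup),
    h₁.sdiff_eq_localLink hX ht₂ (.inr hcoup), h₁.symm.sdiff_eq_localLink hX' ht₂ (.inr hcoup),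
    edgesBetween_inter_eq hX hY, edgesBetween_inter_eq hX hY', edgesBetween_inter_eq hX' hY,
    edgesBetween_inter_eq hX' hY'⟩

/-- Correspondence of links: for separations `{A₁,A₂}` and
`{C₁,C₂}` with `r`-coupled `r`-tomic separators `X`, `Y` inducing the
`r`-local separations `{E₁,X,E₂}` and `{F₁,Y,F₂}`: the `X`-link for `C_i`
equals the `X`-link for `F_i`, the `Y`-link for `A_i` equals the `Y`-link for
`E_i`, and `E_G(X∩Y, (A_i∖A_{3−i})∩(C_j∖C_{3−j})) = E_i ∩ F_j ∩ ∂(X∩Y)`. -/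
theorem statement15 {V : Type*} (G : SimpleGraph V) (r : ℕ) (hG : G.Connected)
    (hgen : CycleSpaceGenShort G r)
    (A₁ A₂ C₁ C₂ : Set V)
    (h₁ : IsSep G A₁ A₂) (h₂ : IsSep G C₁ C₂)
    (X Y : Set V) (E₁ E₂ F₁ F₂ : Set (Sym2 V))
    (hX : X = A₁ ∩ A₂) (hY : Y = C₁ ∩ C₂)
    (ht₁ : Rtomic G r X) (ht₂ : Rtomic G r Y)
    (hcoup : RCoupled G r X Y)
    (hE₁ : E₁ = edgesBetween G (A₁ \ X) X) (hE₂ : E₂ = edgesBetween G (A₂ \ X) X)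
    (hF₁ : F₁ = edgesBetween G (C₁ \ Y) Y) (hF₂ : F₂ = edgesBetween G (C₂ \ Y) Y) :
    (X \ C₂ = LocalLink G r X Y F₁) ∧ (X \ C₁ = LocalLink G r X Y F₂) ∧
    (Y \ A₂ = LocalLink G r Y X E₁) ∧ (Y \ A₁ = LocalLink G r Y X E₂) ∧
    (edgesBetween G (X ∩ Y) ((A₁ \ A₂) ∩ (C₁ \ C₂)) = E₁ ∩ F₁ ∩ edgeBdry G (X ∩ Y)) ∧
    (edgesBetween G (X ∩ Y) ((A₁ \ A₂) ∩ (C₂ \ C₁)) = E₁ ∩ F₂ ∩ edgeBdry G (X ∩ Y)) ∧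
    (edgesBetween G (X ∩ Y) ((A₂ \ A₁) ∩ (C₁ \ C₂)) = E₂ ∩ F₁ ∩ edgeBdry G (X ∩ Y)) ∧
    (edgesBetween G (X ∩ Y) ((A₂ \ A₁) ∩ (C₂ \ C₁)) = E₂ ∩ F₂ ∩ edgeBdry G (X ∩ Y)) :=
  statement15_general G r A₁ A₂ C₁ C₂ h₁ h₂ X Y E₁ E₂ F₁ F₂ hX hY ht₁ ht₂ hcoup hE₁ hE₂ hF₁ hF₂

end LS
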